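/- (Crucial lemma.) Let P be a budget proposal, V a vote profile, and ℓ a budget limit with cost(a) ≤ ℓ for every item a ∈ P. Let B and B' be two feasible budgets. If there exist items b ∈ B \ B' and b' ∈ B' \ B with a weak majority path b ⇝ b' in the weak majority graph of (P, V), then there is a weak domination path B ⊳⊳⊳ B'. -/

import Mathlib

open Classical

variable {α : Type*} [DecidableEq α]

/-- A vote `v : α → ℕ` ranks item `a` above item `b` iff `v a < v b`.
`v` prefers budget `B` over budget `B'` if `B \ B'` is nonempty and
every item of `B \ B'` is ranked above every item of `B' \ B`. -/
def Prefers (v : α → ℕ) (B B' : Finset α) : Prop :=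
  (B \ B').Nonempty ∧ ∀ a ∈ B \ B', ∀ b ∈ B' \ B, v a < v b

/-- The number of votes in the profile `V` that prefer `B` over `B'`. -/
noncomputable def domCount (V : List (α → ℕ)) (B B' : Finset α) : ℕ :=
  V.countP fun v => decide (Prefers v B B')

/-- `B` dominates `B'` if strictly more than half of the votes prefer `B` over `B'`. -/
def Dominates (V : List (α → ℕ)) (B B' : Finset α) : Prop :=
  2 * domCount V B B' > V.length

/-- `B` weakly dominates `B'` (written `B ⊳ B'`) if `B'` does not dominate `B`. -/
def WeakDom (V : List (α → ℕ)) (B B' : Finset α) : Prop :=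
  ¬ Dominates V B' B

/-- A budget `B` is feasible if it consists of proposed items and its total
cost is within the budget limit `ℓ`. -/
def Feasible (P : Finset α) (cost : α → ℕ) (ℓ : ℕ) (B : Finset α) : Prop :=
  B ⊆ P ∧ ∑ b ∈ B, cost b ≤ ℓ

/-- A Condorcet-winning budget is a feasible budget dominating every other
feasible budget. -/
def CondorcetWinning (P : Finset α) (cost : α → ℕ) (ℓ : ℕ)
    (V : List (α → ℕ)) (B : Finset α) : Prop :=
  Feasible P cost ℓ B ∧
  ∀ B', Feasible P cost ℓ B' → B' ≠ B → Dominates V B B'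

/-- Number of votes ranking `a` above `b`. -/
noncomputable def aboveCount (V : List (α → ℕ)) (a b : α) : ℕ :=
  V.countP fun v => decide (v a < v b)

/-- Arc `(a, b)` of the majority graph: a strict majority of the votes rank
`a` above `b`. -/
def MajArc (V : List (α → ℕ)) (a b : α) : Prop :=
  2 * aboveCount V a b > V.length

/-- Arc `(a, b)` of the weak majority graph: either the majority graph has the
arc `(a, b)`, or it has neither arc between `a` and `b`. -/
def WeakMajArc (V : List (α → ℕ)) (a b : α) : Prop :=
  MajArc V a b ∨ (¬ MajArc V a b ∧ ¬ MajArc V b a)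

/-- A weak majority path `a ⇝ b`: a directed path in the weak majority graph
on the vertex set `P`. -/
def WeakMajPath (P : Finset α) (V : List (α → ℕ)) (a b : α) : Prop :=
  Relation.ReflTransGen (fun x y => x ∈ P ∧ y ∈ P ∧ WeakMajArc V x y) a b

/-- A weak domination path `B ⊳⊳⊳ B'`: a finite sequence of feasible budgets
starting at `B` and ending at `B'`, each weakly dominating the next. -/
def WDPath (P : Finset α) (cost : α → ℕ) (ℓ : ℕ) (V : List (α → ℕ)) :
    Finset α → Finset α → Prop :=
  Relation.ReflTransGen
    (fun B B' => Feasible P cost ℓ B ∧ Feasible P cost ℓ B' ∧ WeakDom V B B')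

/-!
A budget weakly dominates each of its subsets, since no vote can prefer a subset over its
superset. So `B ⊳ {b}`. A weak majority arc `x → y` means that `y` is not ranked above `x`
by a strict majority; as every vote preferring a budget `C ∋ y` over `{x}` (with `x ∉ C`)
ranks `y` above `x`, this gives `{x} ⊳ C`. Walking along the path `b ⇝ b'` through singletons
until it first enters `B'` yields `B ⊳ {b} ⊳ ⋯ ⊳ {x} ⊳ B'`; singletons are feasible because
every item costs at most `ℓ`.
-/

lemma aboveCount_add_aboveCount_le {β : Type*} (V : List (β → ℕ)) (x y : β) :
    aboveCount V x y + aboveCount V y x ≤ V.length := by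
  rw [List.length_eq_countP_add_countP (fun v => decide (v x < v y)) (l := V)]
  refine Nat.add_le_add_left (List.countP_mono_left fun v _ hv => ?_) _
  simp only [decide_eq_true_eq] at hv ⊢
  omega

lemma WeakMajArc.not_majArc_symm {β : Type*} {V : List (β → ℕ)} {x y : β}
    (h : WeakMajArc V x y) : ¬ MajArc V y x := by
  rcases h with hxy | ⟨-, hyx⟩
  · have := aboveCount_add_aboveCount_le V x y
    unfold MajArc at hxy ⊢
    omega
  · exact hyx

lemma feasible_singleton {β : Type*} {P : Finset β} {cost : β → ℕ} {ℓ : ℕ}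
    (hcost : ∀ a ∈ P, cost a ≤ ℓ) {x : β} (hx : x ∈ P) : Feasible P cost ℓ {x} :=
  ⟨Finset.singleton_subset_iff.mpr hx, by simpa using hcost x hx⟩

section

variable {P : Finset α} {cost : α → ℕ} {ℓ : ℕ} {V : List (α → ℕ)}

lemma weakDom_of_subset {B C : Finset α} (h : C ⊆ B) : WeakDom V B C := by
  have hzero : domCount V C B = 0 := by
    refine List.countP_eq_zero.mpr fun v _ => ?_
    simp only [decide_eq_true_eq, Prefers, Finset.sdiff_eq_empty_iff_subset.mpr h]
    simp
  simp [WeakDom, Dominates, hzero]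

lemma domCount_le_aboveCount {C : Finset α} {x y : α} (hx : x ∉ C) (hy : y ∈ C) :
    domCount V C {x} ≤ aboveCount V y x := by
  refine List.countP_mono_left fun v _ hv => ?_
  simp only [decide_eq_true_eq] at hv ⊢
  have hyx : y ≠ x := fun h => hx (h ▸ hy)
  exact hv.2 y (by simp [hy, hyx]) x (by simp [hx])

lemma weakDom_singleton_of_not_majArc {C : Finset α} {x y : α} (hx : x ∉ C) (hy : y ∈ C)
    (h : ¬ MajArc V y x) : WeakDom V {x} C := by
  have := domCount_le_aboveCount (V := V) hx hy
  unfold WeakDom Dominates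
  unfold MajArc at h
  omega

lemma wdPath_singleton_of_weakMajPath (hcost : ∀ a ∈ P, cost a ≤ ℓ) {B' : Finset α}
    (hB' : Feasible P cost ℓ B') {x b' : α} (hpath : WeakMajPath P V x b') (hb' : b' ∈ B')
    (hx : x ∉ B') : WDPath P cost ℓ V {x} B' := by
  induction hpath using Relation.ReflTransGen.head_induction_on with
  | refl => exact absurd hb' hx
  | @head x c harc _ ih =>
    obtain ⟨hxP, hcP, hxc⟩ := harc
    have hfx := feasible_singleton hcost hxP
    by_cases hc : c ∈ B'
    · exact .single ⟨hfx, hB', weakDom_singleton_of_not_majArc hx hc hxc.not_majArc_symm⟩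
    · obtain rfl | hne := eq_or_ne x c
      · exact ih hc
      · have hxc' : x ∉ ({c} : Finset α) := by simpa using hne
        exact .head ⟨hfx, feasible_singleton hcost hcP,
          weakDom_singleton_of_not_majArc hxc' (Finset.mem_singleton_self c)
            hxc.not_majArc_symm⟩ (ih hc)

end

theorem crucial_lemma_general (P : Finset α) (cost : α → ℕ) (ℓ : ℕ)
    (V : List (α → ℕ))
    (hcost : ∀ a ∈ P, cost a ≤ ℓ)
    (B B' : Finset α) (hB : Feasible P cost ℓ B) (hB' : Feasible P cost ℓ B')
    (b b' : α) (hb : b ∈ B \ B') (hb' : b' ∈ B' \ B)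
    (hpath : WeakMajPath P V b b') :
    WDPath P cost ℓ V B B' := by
  obtain ⟨hbB, hbB'⟩ := Finset.mem_sdiff.mp hb
  have hbP : b ∈ P := hB.1 hbB
  exact .head
    ⟨hB, feasible_singleton hcost hbP, weakDom_of_subset (Finset.singleton_subset_iff.mpr hbB)⟩
    (wdPath_singleton_of_weakMajPath hcost hB' hpath (Finset.mem_sdiff.mp hb').1 hbB')

/-- crucial lemma: for feasible budgets `B`, `B'`, if some
`b ∈ B \ B'` has a weak majority path to some `b' ∈ B' \ B`, then there is
a weak domination path `B ⊳⊳⊳ B'`. -/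
theorem crucial_lemma (P : Finset α) (cost : α → ℕ) (ℓ : ℕ)
    (V : List (α → ℕ)) (hV : ∀ v ∈ V, Set.InjOn v ↑P)
    (hcost : ∀ a ∈ P, cost a ≤ ℓ)
    (B B' : Finset α) (hB : Feasible P cost ℓ B) (hB' : Feasible P cost ℓ B')
    (b b' : α) (hb : b ∈ B \ B') (hb' : b' ∈ B' \ B)
    (hpath : WeakMajPath P V b b') :
    WDPath P cost ℓ V B B' :=
  crucial_lemma_general P cost ℓ V hcost B B' hB hB' b b' hb hb' hpath
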